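/- The poly-Bernoulli polynomials satisfy the difference identity B_n^{(k)}(z) - B_n^{(k)}(z-1) = ∑_{l=1}^n C(n,l) z^{n-l} B_{l-1}^{(k-1)}(-1), for k ≥ 2 and n ≥ 1. -/

import Mathlib

/-- Generating function `Li_k(1-e^{-t})/(1-e^{-t})` of the poly-Bernoulli numbers,
as a formal power series over `ℚ` (coefficientwise: `∑_{m≥1} (1-e^{-t})^{m-1}/m^k`). -/
noncomputable def pbGF (k : ℕ) : PowerSeries ℚ :=
  PowerSeries.mk fun n => ∑ m ∈ Finset.range (n + 1),
    ((m + 1 : ℚ) ^ k)⁻¹ *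
      PowerSeries.coeff n ((1 - PowerSeries.rescale (-1) (PowerSeries.exp ℚ)) ^ m)

/-- Poly-Bernoulli numbers `B_n^{(k)}`. -/
noncomputable def polyBernoulliNum (k n : ℕ) : ℚ :=
  (Nat.factorial n : ℚ) * PowerSeries.coeff n (pbGF k)

/-- Generating function `Li_k(1-e^{-t})/(e^t-1) = e^{-t}·Li_k(1-e^{-t})/(1-e^{-t})`. -/
noncomputable def cGF (k : ℕ) : PowerSeries ℚ :=
  PowerSeries.rescale (-1) (PowerSeries.exp ℚ) * pbGF k

/-- Companion poly-Bernoulli numbers `C_n^{(k)}`. -/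
noncomputable def polyCNum (k n : ℕ) : ℚ :=
  (Nat.factorial n : ℚ) * PowerSeries.coeff n (cGF k)

/-- Poly-Bernoulli polynomials `B_n^{(k)}(z)` (EGF `e^{zt}·Li_k(1-e^{-t})/(1-e^{-t})`). -/
noncomputable def polyBernoulliPoly (k n : ℕ) (z : ℚ) : ℚ :=
  ∑ j ∈ Finset.range (n + 1), (n.choose j : ℚ) * polyBernoulliNum k j * z ^ (n - j)

/-- Companion poly-Bernoulli polynomials `C_n^{(k)}(z)` (EGF `e^{zt}·Li_k(1-e^{-t})/(e^t-1)`). -/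
noncomputable def polyCPoly (k n : ℕ) (z : ℚ) : ℚ :=
  ∑ j ∈ Finset.range (n + 1), (n.choose j : ℚ) * polyCNum k j * z ^ (n - j)


open PowerSeries Finset

noncomputable def pbE : PowerSeries ℚ := PowerSeries.rescale (-1) (PowerSeries.exp ℚ)
noncomputable def pbU : PowerSeries ℚ := 1 - pbE

lemma coeff_pbE (n : ℕ) : PowerSeries.coeff n pbE = (-1) ^ n / n.factorial := by
  simp [pbE, PowerSeries.coeff_rescale, PowerSeries.coeff_exp, div_eq_mul_inv,
    Algebra.algebraMap_self, mul_comm]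

lemma constantCoeff_pbU : PowerSeries.constantCoeff pbU = 0 := by
  have := coeff_pbE 0
  simp only [PowerSeries.coeff_zero_eq_constantCoeff] at this
  simp [pbU, map_sub, this]

lemma derivative_pbU : PowerSeries.derivative ℚ pbU = pbE := by
  ext n
  rw [pbU, map_sub, Derivation.map_one_eq_zero, zero_sub, map_neg,
    PowerSeries.coeff_derivative, coeff_pbE, coeff_pbE]
  have h : ((n + 1).factorial : ℚ) = (n + 1) * n.factorial := by
    rw [Nat.factorial_succ]; push_cast; ring
  rw [h, pow_succ]
  have h2 : (n.factorial : ℚ) ≠ 0 := Nat.cast_ne_zero.mpr n.factorial_ne_zero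
  have h3 : ((n : ℚ) + 1) ≠ 0 := by positivity
  field_simp

lemma coeff_pbU_pow_eq_zero {n m : ℕ} (h : n < m) :
    PowerSeries.coeff n (pbU ^ m) = 0 := by
  have hX : (PowerSeries.X : PowerSeries ℚ) ∣ pbU :=
    PowerSeries.X_dvd_iff.mpr constantCoeff_pbU
  have : (PowerSeries.X : PowerSeries ℚ) ^ m ∣ pbU ^ m := pow_dvd_pow_of_dvd hX m
  exact PowerSeries.X_pow_dvd_iff.mp this n h

lemma coeff_pbGF (k n : ℕ) : PowerSeries.coeff n (pbGF k) =
    ∑ m ∈ Finset.range (n + 1), ((m + 1 : ℚ) ^ k)⁻¹ *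
      PowerSeries.coeff n (pbU ^ m) := by
  rw [pbGF, PowerSeries.coeff_mk]; rfl

noncomputable def pbQ (k N : ℕ) : PowerSeries ℚ :=
  ∑ m ∈ Finset.range N, PowerSeries.C ((m + 1 : ℚ) ^ k)⁻¹ * pbU ^ m

lemma coeff_pbQ (k N n : ℕ) : PowerSeries.coeff n (pbQ k N) =
    ∑ m ∈ Finset.range N, ((m + 1 : ℚ) ^ k)⁻¹ * PowerSeries.coeff n (pbU ^ m) := by
  rw [pbQ, map_sum]
  exact Finset.sum_congr rfl fun m _ => by rw [PowerSeries.coeff_C_mul]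

lemma coeff_pbGF_eq_pbQ {k N n : ℕ} (h : n < N) :
    PowerSeries.coeff n (pbGF k) = PowerSeries.coeff n (pbQ k N) := by
  rw [coeff_pbGF, coeff_pbQ]
  apply Finset.sum_subset
  · exact Finset.range_subset_range.mpr h
  · intro m _ hm
    rw [coeff_pbU_pow_eq_zero (by simpa using hm), mul_zero]

lemma coeff_mul_congr {f g h : PowerSeries ℚ} {N : ℕ}
    (hfg : ∀ j ≤ N, PowerSeries.coeff j f = PowerSeries.coeff j g) :
    PowerSeries.coeff N (h * f) = PowerSeries.coeff N (h * g) := by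
  rw [PowerSeries.coeff_mul, PowerSeries.coeff_mul]
  refine Finset.sum_congr rfl fun p hp => ?_
  rw [Finset.HasAntidiagonal.mem_antidiagonal] at hp
  rw [hfg p.2 (by omega)]

/-- core derivative identity, termwise form -/
lemma coeff_deriv_pow (m n : ℕ) :
    ((n : ℚ) + 1) * PowerSeries.coeff (n + 1) (pbU ^ (m + 1)) =
      ((m : ℚ) + 1) * PowerSeries.coeff n (pbE * pbU ^ m) := by
  have hD : PowerSeries.derivative ℚ (pbU ^ (m + 1)) =
      (m + 1) • pbU ^ m • PowerSeries.derivative ℚ pbU := by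
    simpa using Derivation.leibniz_pow (PowerSeries.derivative ℚ) (a := pbU) (m + 1)
  rw [derivative_pbU] at hD
  rw [smul_eq_mul] at hD
  have this1 := congrArg (PowerSeries.coeff n) hD
  rw [PowerSeries.coeff_derivative, map_nsmul, nsmul_eq_mul] at this1
  push_cast at this1
  rw [mul_comm pbE (pbU ^ m)]
  linear_combination this1

/-- The core lemma: `d/dt ((1-e^{-t}) pbGF(k+1)) = e^{-t} pbGF(k)` coefficientwise. -/
lemma core (k n : ℕ) :
    ((n : ℚ) + 1) * PowerSeries.coeff (n + 1) (pbU * pbGF (k + 1)) =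
      PowerSeries.coeff n (pbE * pbGF k) := by
  have h1 : PowerSeries.coeff (n + 1) (pbU * pbGF (k + 1)) =
      PowerSeries.coeff (n + 1) (pbU * pbQ (k + 1) (n + 2)) :=
    coeff_mul_congr fun j hj => coeff_pbGF_eq_pbQ (by omega)
  have h2 : PowerSeries.coeff n (pbE * pbGF k) =
      PowerSeries.coeff n (pbE * pbQ k (n + 2)) :=
    coeff_mul_congr fun j hj => coeff_pbGF_eq_pbQ (by omega)
  rw [h1, h2, pbQ, pbQ, Finset.mul_sum, Finset.mul_sum, map_sum, map_sum, Finset.mul_sum]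
  refine Finset.sum_congr rfl fun m hm => ?_
  have e1 : pbU * (PowerSeries.C ((m + 1 : ℚ) ^ (k + 1))⁻¹ * pbU ^ m) =
      PowerSeries.C ((m + 1 : ℚ) ^ (k + 1))⁻¹ * pbU ^ (m + 1) := by ring
  have e2 : pbE * (PowerSeries.C ((m + 1 : ℚ) ^ k)⁻¹ * pbU ^ m) =
      PowerSeries.C ((m + 1 : ℚ) ^ k)⁻¹ * (pbE * pbU ^ m) := by ring
  rw [e1, e2, PowerSeries.coeff_C_mul, PowerSeries.coeff_C_mul]
  have hm1 : ((m : ℚ) + 1) ≠ 0 := by positivity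
  have hd := coeff_deriv_pow m n
  have hpk : ((m : ℚ) + 1) ^ k ≠ 0 := by positivity
  have key : (((m : ℚ) + 1) ^ (k + 1))⁻¹ * ((m : ℚ) + 1) = (((m : ℚ) + 1) ^ k)⁻¹ := by
    rw [pow_succ, mul_inv]
    field_simp
  have hmm : ((m + 1 : ℚ) ^ (k + 1))⁻¹ = (((m : ℚ) + 1) ^ (k + 1))⁻¹ := by norm_num
  have hmm2 : ((m + 1 : ℚ) ^ k)⁻¹ = (((m : ℚ) + 1) ^ k)⁻¹ := by norm_num
  rw [hmm, hmm2]
  linear_combination (((m : ℚ) + 1) ^ (k + 1))⁻¹ * hd + (PowerSeries.coeff n (pbE * pbU ^ m)) * key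

/-- Evaluation lemma: EGF product with `e^{zt}`. -/
lemma eval_sum (F : PowerSeries ℚ) (n : ℕ) (z : ℚ) :
    ∑ j ∈ Finset.range (n + 1),
        (n.choose j : ℚ) * ((j.factorial : ℚ) * PowerSeries.coeff j F) * z ^ (n - j) =
      (n.factorial : ℚ) *
        PowerSeries.coeff n (PowerSeries.rescale z (PowerSeries.exp ℚ) * F) := by
  rw [PowerSeries.coeff_mul, Finset.Nat.sum_antidiagonal_eq_sum_range_succ_mk, Finset.mul_sum,
    ← Finset.sum_range_reflect]
  refine Finset.sum_congr rfl fun i hi => ?_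
  have hi' : i ≤ n := Finset.mem_range_succ_iff.mp hi
  simp only [Nat.add_sub_cancel]
  rw [Nat.sub_sub_self hi', Nat.choose_symm hi', PowerSeries.coeff_rescale,
    PowerSeries.coeff_exp]
  have hfac : (n.factorial : ℚ) = (n.choose i : ℚ) * i.factorial * (n - i).factorial := by
    rw_mod_cast [Nat.choose_mul_factorial_mul_factorial hi']
  have hne : (i.factorial : ℚ) ≠ 0 := Nat.cast_ne_zero.mpr (Nat.factorial_ne_zero _)
  simp only [Algebra.algebraMap_self, RingHom.id_apply]
  rw [hfac]
  field_simp

/-- Difference identity: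
`B_n^{(k)}(z) - B_n^{(k)}(z-1) = ∑_{l=1}^n C(n,l) z^{n-l} B_{l-1}^{(k-1)}(-1)`
for `k ≥ 2`, `n ≥ 1`. -/
theorem polyBernoulliPoly_difference (k : ℕ) (hk : 2 ≤ k) (n : ℕ) (hn : 1 ≤ n) (z : ℚ) :
    polyBernoulliPoly k n z - polyBernoulliPoly k n (z - 1) =
      ∑ l ∈ Finset.Icc 1 n, (n.choose l : ℚ) * z ^ (n - l) *
        polyBernoulliPoly (k - 1) (l - 1) (-1) := by
  obtain ⟨k', rfl⟩ : ∃ k', k = k' + 2 := ⟨k - 2, by omega⟩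
  have heval : ∀ (kk nn : ℕ) (w : ℚ), polyBernoulliPoly kk nn w =
      (nn.factorial : ℚ) * PowerSeries.coeff nn
        (PowerSeries.rescale w (PowerSeries.exp ℚ) * pbGF kk) := by
    intro kk nn w
    rw [← eval_sum]
    unfold polyBernoulliPoly polyBernoulliNum
    rfl
  rw [heval, heval]
  have hres : PowerSeries.rescale (z - 1) (PowerSeries.exp ℚ) =
      PowerSeries.rescale z (PowerSeries.exp ℚ) * pbE := by
    rw [show pbE = PowerSeries.rescale (-1) (PowerSeries.exp ℚ) from rfl,
      PowerSeries.exp_mul_exp_eq_exp_add]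
    have : z + -1 = z - 1 := by ring
    rw [this]
  rw [hres, ← mul_sub, ← map_sub]
  have hprod : PowerSeries.rescale z (PowerSeries.exp ℚ) * pbGF (k' + 2) -
      PowerSeries.rescale z (PowerSeries.exp ℚ) * pbE * pbGF (k' + 2) =
      PowerSeries.rescale z (PowerSeries.exp ℚ) * (pbU * pbGF (k' + 2)) := by
    rw [show pbU = 1 - pbE from rfl]; ring
  rw [hprod, ← eval_sum (pbU * pbGF (k' + 2)) n z]
  rw [Finset.range_eq_Ico, Finset.sum_eq_sum_Ico_succ_bot (by omega : 0 < n + 1)]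
  have h0 : PowerSeries.coeff 0 (pbU * pbGF (k' + 2)) = 0 := by
    rw [PowerSeries.coeff_zero_eq_constantCoeff, map_mul, constantCoeff_pbU, zero_mul]
  rw [h0, mul_zero, mul_zero, zero_mul, zero_add, Finset.Ico_add_one_right_eq_Icc]
  refine Finset.sum_congr rfl fun l hl => ?_
  rw [Finset.mem_Icc] at hl
  obtain ⟨j, rfl⟩ : ∃ j, l = j + 1 := ⟨l - 1, by omega⟩
  have hB : polyBernoulliPoly (k' + 2 - 1) (j + 1 - 1) (-1) =
      (j.factorial : ℚ) * PowerSeries.coeff j (pbE * pbGF (k' + 1)) := by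
    show polyBernoulliPoly (k' + 1) j (-1) = _
    rw [heval]
    rfl
  rw [hB]
  have hc := core (k' + 1) j
  have hfac : ((j + 1).factorial : ℚ) = ((j : ℚ) + 1) * j.factorial := by
    rw [Nat.factorial_succ]; push_cast; ring
  rw [hfac]
  linear_combination ((n.choose (j + 1) : ℚ) * z ^ (n - (j + 1)) * (j.factorial : ℚ)) * hc
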